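/- Fix ε > 0. Define a₀ = 1 and aₙ = ∏_{k=1}^{n} ((2k − √2)(2k + 1 − √2))/((2k)(2k − 2√2)) for n ≥ 1, and let f_α(t) = t^{−2+√2} · Σ_{n=0}^{∞} aₙ·(ε/t²)ⁿ. Then for every t ≥ 10√ε the series converges absolutely; f_α is twice differentiable on (10√ε, ∞) and satisfies (t² − ε)·f_α''(t) + 5t·f_α'(t) + 2·f_α(t) = 0 there; and (1/2)·t^{−2+√2} ≤ f_α(t) ≤ 2·t^{−2+√2} for all t ≥ 10√ε. -/

import Mathlib

/-!
Each power t^s is an eigenfunction of the Euler operator t²D² + 5tD + 2 with eigenvalue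
s² + 4s + 2, whose roots are −2 ± √2, while the remaining term −εD² lowers the exponent by 2.
So with cₙ = aₙεⁿ and sₙ = −2 + √2 − 2n, the series Σ cₙ t^{sₙ} is annihilated by the
operator exactly when c_{n+1}(s_{n+1}² + 4s_{n+1} + 2) = ε cₙ sₙ(sₙ − 1), which is the product
formula for aₙ. Since |aₙ| ≤ 4ⁿ, for t ≥ 10√ε the n-th term and its first two derivatives are
bounded uniformly by a polynomial in n times (1/25)ⁿ; this justifies differentiating termwise
and gives |Σ aₙ (ε/t²)ⁿ − 1| ≤ 1/24.
-/

noncomputable section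

/-- The coefficients aₙ = ∏_{k=1}^{n} ((2k − √2)(2k + 1 − √2))/((2k)(2k − 2√2)),
with a₀ = 1. -/
def aCoeff (n : ℕ) : ℝ :=
  ∏ k ∈ Finset.Icc 1 n,
    ((2 * (k:ℝ) - Real.sqrt 2) * (2 * (k:ℝ) + 1 - Real.sqrt 2)) /
      ((2 * (k:ℝ)) * (2 * (k:ℝ) - 2 * Real.sqrt 2))

/-- The homogeneous solution f_α(t) = t^{−2+√2}·Σ_{n=0}^∞ aₙ·(ε/t²)ⁿ. -/
def fAlpha (ε t : ℝ) : ℝ :=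
  t ^ (-2 + Real.sqrt 2 : ℝ) * ∑' n : ℕ, aCoeff n * (ε / t ^ 2) ^ n

open Real

section RpowSeries

variable {c e : ℕ → ℝ} {T t : ℝ}

theorem summable_mul_rpow_of_le (hT : 0 < T) (hTt : T ≤ t) (he : ∀ n, e n ≤ 0)
    (hc : Summable fun n => |c n| * T ^ e n) : Summable fun n => c n * t ^ e n := by
  refine .of_norm_bounded hc fun n => ?_
  rw [Real.norm_eq_abs, abs_mul, abs_of_pos (rpow_pos_of_pos (hT.trans_le hTt) _)]
  exact mul_le_mul_of_nonneg_left (rpow_le_rpow_of_nonpos hT hTt (he n)) (abs_nonneg _)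

theorem hasDerivAt_tsum_mul_rpow (hT : 0 < T) (he : ∀ n, e n ≤ 0)
    (hc : Summable fun n => |c n| * T ^ e n)
    (hc' : Summable fun n => |c n * e n| * T ^ (e n - 1)) (ht : T < t) :
    HasDerivAt (fun z => ∑' n, c n * z ^ e n) (∑' n, c n * e n * t ^ (e n - 1)) t := by
  have ht' : t ∈ Set.Ioi T := ht
  refine hasDerivAt_tsum_of_isPreconnected (g := fun n z => c n * z ^ e n)
    (g' := fun n z => c n * e n * z ^ (e n - 1)) hc' isOpen_Ioi isPreconnected_Ioi
    (fun n z hz => ?_) (fun n z hz => ?_) ht' (summable_mul_rpow_of_le hT ht.le he hc) ht'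
  · simpa only [mul_assoc] using
      (hasDerivAt_rpow_const (p := e n) (Or.inl (hT.trans hz).ne')).const_mul (c n)
  · rw [Real.norm_eq_abs, abs_mul, abs_of_pos (rpow_pos_of_pos (hT.trans hz) _)]
    exact mul_le_mul_of_nonneg_left
      (rpow_le_rpow_of_nonpos hT (le_of_lt hz) (by linarith [he n])) (abs_nonneg _)

end RpowSeries

theorem abs_tsum_sub_one_le {f : ℕ → ℝ} {q : ℝ} (hq₀ : 0 ≤ q) (hq₁ : q < 1) (hf₀ : f 0 = 1)
    (hf : ∀ n, |f n| ≤ q ^ n) : |∑' n, f n - 1| ≤ q / (1 - q) := by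
  have hsum : Summable f := .of_norm_bounded (summable_geometric_of_lt_one hq₀ hq₁) hf
  rw [hsum.tsum_eq_zero_add, hf₀, add_sub_cancel_left]
  refine tsum_of_norm_bounded ?_ fun n => (Real.norm_eq_abs _).trans_le (hf (n + 1))
  simpa only [pow_succ', div_eq_mul_inv] using (hasSum_geometric_of_lt_one hq₀ hq₁).mul_left q

theorem euler_rpow {t : ℝ} (ht : 0 < t) (s : ℝ) :
    t ^ 2 * (s * (s - 1) * t ^ (s - 1 - 1)) + 5 * t * (s * t ^ (s - 1)) + 2 * t ^ s
      = (s ^ 2 + 4 * s + 2) * t ^ s := by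
  rw [rpow_sub_one ht.ne', rpow_sub_one ht.ne']
  field_simp
  ring

def aFactor (k : ℝ) : ℝ :=
  ((2 * k - √2) * (2 * k + 1 - √2)) / ((2 * k) * (2 * k - 2 * √2))

theorem aCoeff_zero : aCoeff 0 = 1 := by simp [aCoeff]

theorem aCoeff_succ (n : ℕ) : aCoeff (n + 1) = aCoeff n * aFactor (n + 1 : ℕ) :=
  Finset.prod_Icc_succ_top (by omega) _

theorem abs_aFactor_le_four {n : ℕ} (hn : 1 ≤ n) : |aFactor n| ≤ 4 := by
  have hs : √2 ^ 2 = 2 := sq_sqrt zero_le_two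
  have h₁ := one_lt_sqrt_two
  have h₂ := sqrt_two_lt_three_halves
  rcases hn.eq_or_lt with rfl | hn
  · have hden : 2 * (1 : ℝ) * (2 * 1 - 2 * √2) < 0 := by linarith
    rw [aFactor, Nat.cast_one, abs_div, abs_of_neg hden, abs_of_pos (by nlinarith),
      div_le_iff₀ (by linarith)]
    nlinarith
  · have hn : (2 : ℝ) ≤ n := by exact_mod_cast hn
    have hden : 0 < 2 * (n : ℝ) * (2 * n - 2 * √2) := by nlinarith
    rw [aFactor, abs_of_nonneg (div_nonneg (by nlinarith) hden.le), div_le_iff₀ hden]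
    nlinarith

theorem abs_aCoeff_le (n : ℕ) : |aCoeff n| ≤ 4 ^ n := by
  induction n with
  | zero => simp [aCoeff_zero]
  | succ n ih =>
    rw [aCoeff_succ, abs_mul, pow_succ]
    exact mul_le_mul ih (abs_aFactor_le_four (by omega)) (abs_nonneg _) (by positivity)

theorem aCoeff_succ_mul (n : ℕ) :
    aCoeff (n + 1) * (2 * ((n + 1 : ℕ) : ℝ) * (2 * (n + 1 : ℕ) - 2 * √2)) =
      aCoeff n * ((2 * ((n + 1 : ℕ) : ℝ) - √2) * (2 * (n + 1 : ℕ) + 1 - √2)) := by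
  have hden : 2 * ((n + 1 : ℕ) : ℝ) * (2 * (n + 1 : ℕ) - 2 * √2) ≠ 0 := by
    refine mul_ne_zero (by positivity) fun h => irrational_sqrt_two.ne_nat (n + 1) ?_
    linarith
  rw [aCoeff_succ, aFactor, mul_assoc, div_mul_cancel₀ _ hden]

theorem abs_aCoeff_mul_pow_le (x : ℝ) (n : ℕ) : |aCoeff n * x ^ n| ≤ (4 * |x|) ^ n := by
  rw [abs_mul, abs_pow, mul_pow]
  gcongr
  exact abs_aCoeff_le n

def fAlphaExp (n : ℕ) : ℝ := -2 + √2 - 2 * n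

def fAlphaCoeff (ε : ℝ) (n : ℕ) : ℝ := aCoeff n * ε ^ n

theorem fAlphaExp_nonpos (n : ℕ) : fAlphaExp n ≤ 0 := by
  have := sqrt_two_lt_three_halves
  unfold fAlphaExp
  linarith [(Nat.cast_nonneg n : (0 : ℝ) ≤ n)]

theorem fAlphaExp_succ (n : ℕ) : fAlphaExp (n + 1) = fAlphaExp n - 1 - 1 := by
  unfold fAlphaExp
  push_cast
  ring

theorem fAlphaExp_indicial (n : ℕ) :
    fAlphaExp n ^ 2 + 4 * fAlphaExp n + 2 = 2 * n * (2 * n - 2 * √2) := by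
  unfold fAlphaExp
  linear_combination sq_sqrt (zero_le_two : (0 : ℝ) ≤ 2)

theorem fAlphaCoeff_succ_mul_indicial (ε : ℝ) (n : ℕ) :
    fAlphaCoeff ε (n + 1) * (fAlphaExp (n + 1) ^ 2 + 4 * fAlphaExp (n + 1) + 2) =
      ε * (fAlphaCoeff ε n * fAlphaExp n * (fAlphaExp n - 1)) := by
  have hrec := aCoeff_succ_mul n
  rw [fAlphaExp_indicial]
  unfold fAlphaCoeff fAlphaExp
  push_cast at hrec ⊢
  linear_combination ε ^ (n + 1) * hrec

theorem fAlphaCoeff_mul_rpow {t : ℝ} (ht : 0 < t) (ε k : ℝ) (n : ℕ) :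
    fAlphaCoeff ε n * t ^ (fAlphaExp n - k) =
      t ^ (-2 + √2 - k) * (aCoeff n * (ε / t ^ 2) ^ n) := by
  rw [fAlphaExp, show -2 + √2 - 2 * (n : ℝ) - k = -2 + √2 - k - (2 * n : ℕ) by push_cast; ring,
    rpow_sub ht, rpow_natCast, pow_mul, fAlphaCoeff, div_pow]
  field_simp

theorem fAlpha_eq_tsum {ε t : ℝ} (ht : 0 < t) :
    fAlpha ε t = ∑' n, fAlphaCoeff ε n * t ^ fAlphaExp n := by
  rw [fAlpha, ← tsum_mul_left]
  refine tsum_congr fun n => ?_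
  simpa using (fAlphaCoeff_mul_rpow ht ε 0 n).symm

section FAlpha

variable {ε t : ℝ}

theorem abs_aCoeff_mul_pow_le_of_ge (hε : 0 < ε) (ht : 10 * √ε ≤ t) (n : ℕ) :
    |aCoeff n * (ε / t ^ 2) ^ n| ≤ (1 / 25) ^ n := by
  have ht₀ : 0 < t := (by positivity : 0 < 10 * √ε).trans_le ht
  have h100 : 100 * ε ≤ t ^ 2 := by
    have := pow_le_pow_left₀ (by positivity) ht 2
    rw [mul_pow, sq_sqrt hε.le] at this
    linarith
  refine (abs_aCoeff_mul_pow_le _ n).trans (pow_le_pow_left₀ (by positivity) ?_ n)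
  rw [abs_of_pos (by positivity), ← mul_div_assoc, div_le_iff₀ (by positivity)]
  linarith

theorem summable_abs_aCoeff_mul_pow (hε : 0 < ε) (ht : 10 * √ε ≤ t) :
    Summable fun n => |aCoeff n * (ε / t ^ 2) ^ n| :=
  .of_nonneg_of_le (fun _ => abs_nonneg _) (abs_aCoeff_mul_pow_le_of_ge hε ht)
    (summable_geometric_of_lt_one (by norm_num) (by norm_num))

theorem abs_tsum_aCoeff_mul_pow_sub_one_le (hε : 0 < ε) (ht : 10 * √ε ≤ t) :
    |∑' n, aCoeff n * (ε / t ^ 2) ^ n - 1| ≤ 1 / 24 := by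
  have := abs_tsum_sub_one_le (by norm_num) (by norm_num) (by simp [aCoeff_zero])
    (abs_aCoeff_mul_pow_le_of_ge hε ht)
  norm_num at this ⊢
  exact this

theorem summable_abs_fAlphaCoeff_mul_rpow (hε : 0 < ε) (k : ℝ) {p : ℕ → ℝ}
    (hp : ∀ n, |p n| ≤ 8 * ((n : ℝ) ^ 2 + 1)) :
    Summable fun n => |fAlphaCoeff ε n * p n| * (10 * √ε) ^ (fAlphaExp n - k) := by
  have hT : 0 < 10 * √ε := by positivity
  have hq : ‖(1 / 25 : ℝ)‖ < 1 := by norm_num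
  have hmajorant := ((summable_pow_mul_geometric_of_norm_lt_one 2 hq).add
    (summable_geometric_of_lt_one (by norm_num : (0 : ℝ) ≤ 1 / 25) (by norm_num))).mul_left
      (8 * (10 * √ε) ^ (-2 + √2 - k))
  refine .of_nonneg_of_le (fun n => by positivity) (fun n => ?_) hmajorant
  calc |fAlphaCoeff ε n * p n| * (10 * √ε) ^ (fAlphaExp n - k)
      = |p n| * ((10 * √ε) ^ (-2 + √2 - k) * |aCoeff n * (ε / (10 * √ε) ^ 2) ^ n|) := by
        rw [← abs_of_pos (rpow_pos_of_pos hT (-2 + √2 - k)), ← abs_mul,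
          ← fAlphaCoeff_mul_rpow hT, abs_mul, abs_mul,
          abs_of_pos (rpow_pos_of_pos hT _)]
        ring
    _ ≤ 8 * ((n : ℝ) ^ 2 + 1) * ((10 * √ε) ^ (-2 + √2 - k) * (1 / 25) ^ n) := by
        gcongr
        exacts [hp n, abs_aCoeff_mul_pow_le_of_ge hε le_rfl n]
    _ = _ := by ring

theorem summable_bound_fAlpha (hε : 0 < ε) :
    Summable fun n => |fAlphaCoeff ε n| * (10 * √ε) ^ fAlphaExp n := by
  simpa using summable_abs_fAlphaCoeff_mul_rpow hε 0 (p := 1) fun n => by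
    rw [Pi.one_apply, abs_one]
    nlinarith [sq_nonneg (n : ℝ)]

theorem summable_bound_deriv_fAlpha (hε : 0 < ε) :
    Summable fun n => |fAlphaCoeff ε n * fAlphaExp n| * (10 * √ε) ^ (fAlphaExp n - 1) := by
  refine summable_abs_fAlphaCoeff_mul_rpow hε 1 fun n => ?_
  have := one_lt_sqrt_two
  have := sqrt_two_lt_three_halves
  rw [fAlphaExp, abs_le]
  constructor <;> nlinarith [sq_nonneg ((n : ℝ) - 1)]

theorem summable_bound_deriv2_fAlpha (hε : 0 < ε) :
    Summable fun n => |fAlphaCoeff ε n * fAlphaExp n * (fAlphaExp n - 1)| *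
      (10 * √ε) ^ (fAlphaExp n - 1 - 1) := by
  refine (summable_abs_fAlphaCoeff_mul_rpow hε 2 (p := fun n => fAlphaExp n * (fAlphaExp n - 1))
    fun n => ?_).congr fun n => by rw [mul_assoc, sub_sub, one_add_one_eq_two]
  have := one_lt_sqrt_two
  have := sqrt_two_lt_three_halves
  have hn : (0 : ℝ) ≤ n := n.cast_nonneg
  have ha : 0 ≤ -fAlphaExp n := by linarith [fAlphaExp_nonpos n]
  have ha' : -fAlphaExp n ≤ 2 * n + 1 := by rw [fAlphaExp]; linarith
  calc |fAlphaExp n * (fAlphaExp n - 1)| = -fAlphaExp n * (-fAlphaExp n + 1) := by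
        rw [abs_of_nonneg (by nlinarith)]; ring
    _ ≤ (2 * n + 1) * (2 * n + 1 + 1) := by gcongr
    _ ≤ 8 * ((n : ℝ) ^ 2 + 1) := by nlinarith

theorem hasDerivAt_fAlpha (hε : 0 < ε) (ht : 10 * √ε < t) :
    HasDerivAt (fAlpha ε) (∑' n, fAlphaCoeff ε n * fAlphaExp n * t ^ (fAlphaExp n - 1)) t := by
  have hT : 0 < 10 * √ε := by positivity
  refine (hasDerivAt_tsum_mul_rpow hT fAlphaExp_nonpos (summable_bound_fAlpha hε)
    (summable_bound_deriv_fAlpha hε) ht).congr_of_eventuallyEq ?_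
  filter_upwards [lt_mem_nhds ht] with z hz using fAlpha_eq_tsum (hT.trans hz)

theorem hasDerivAt_deriv_fAlpha (hε : 0 < ε) (ht : 10 * √ε < t) :
    HasDerivAt (deriv (fAlpha ε))
      (∑' n, fAlphaCoeff ε n * fAlphaExp n * (fAlphaExp n - 1) * t ^ (fAlphaExp n - 1 - 1)) t := by
  have hT : 0 < 10 * √ε := by positivity
  refine (hasDerivAt_tsum_mul_rpow (c := fun n => fAlphaCoeff ε n * fAlphaExp n)
    (e := fun n => fAlphaExp n - 1) hT (fun n => by linarith [fAlphaExp_nonpos n])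
    (summable_bound_deriv_fAlpha hε) (summable_bound_deriv2_fAlpha hε) ht).congr_of_eventuallyEq ?_
  filter_upwards [lt_mem_nhds ht] with z hz using (hasDerivAt_fAlpha hε hz).deriv

theorem fAlpha_ode_tsum (hε : 0 < ε) (ht : 10 * √ε ≤ t) :
    (t ^ 2 - ε) *
        ∑' n, fAlphaCoeff ε n * fAlphaExp n * (fAlphaExp n - 1) * t ^ (fAlphaExp n - 1 - 1)
      + 5 * t * ∑' n, fAlphaCoeff ε n * fAlphaExp n * t ^ (fAlphaExp n - 1)
      + 2 * ∑' n, fAlphaCoeff ε n * t ^ fAlphaExp n = 0 := by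
  have hT : 0 < 10 * √ε := by positivity
  have ht₀ : 0 < t := hT.trans_le ht
  set A := fun n => fAlphaCoeff ε n * t ^ fAlphaExp n
  set B := fun n => fAlphaCoeff ε n * fAlphaExp n * t ^ (fAlphaExp n - 1)
  set C := fun n => fAlphaCoeff ε n * fAlphaExp n * (fAlphaExp n - 1) * t ^ (fAlphaExp n - 1 - 1)
  have hA : Summable A :=
    summable_mul_rpow_of_le hT ht fAlphaExp_nonpos (summable_bound_fAlpha hε)
  have hB : Summable B :=
    summable_mul_rpow_of_le hT ht (fun n => by linarith [fAlphaExp_nonpos n])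
      (summable_bound_deriv_fAlpha hε)
  have hC : Summable C :=
    summable_mul_rpow_of_le hT ht (fun n => by linarith [fAlphaExp_nonpos n])
      (summable_bound_deriv2_fAlpha hε)
  have hterm : ∀ n, t ^ 2 * C n + 5 * t * B n + 2 * A n =
      fAlphaCoeff ε n * (fAlphaExp n ^ 2 + 4 * fAlphaExp n + 2) * t ^ fAlphaExp n := fun n => by
    linear_combination fAlphaCoeff ε n * euler_rpow ht₀ (fAlphaExp n)
  have hsum := ((hC.hasSum.mul_left (t ^ 2)).add (hB.hasSum.mul_left (5 * t))).add
    (hA.hasSum.mul_left 2)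
  -- the 0-th term vanishes as s₀ is an indicial root; by the recursion the (n+1)-st is ε · C n
  have hshift : HasSum (fun n => t ^ 2 * C n + 5 * t * B n + 2 * A n) (ε * ∑' n, C n) := by
    refine (hasSum_nat_add_iff' 1).mp ?_
    rw [Finset.sum_range_one, hterm 0, fAlphaExp_indicial 0]
    simp_rw [hterm, fAlphaCoeff_succ_mul_indicial, fAlphaExp_succ]
    simpa [C, mul_assoc] using hC.hasSum.mul_left ε
  linear_combination hsum.unique hshift

end FAlpha

/-- The series defining f_α converges absolutely for t ≥ 10√ε, f_α solves the
ODE (t² − ε)y'' + 5t·y' + 2y = 0 on (10√ε, ∞), and f_α(t) is comparable to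
t^{−2+√2} there. -/
theorem fAlpha_properties (ε : ℝ) (hε : 0 < ε) :
    (∀ t : ℝ, 10 * Real.sqrt ε ≤ t →
      Summable (fun n : ℕ => |aCoeff n * (ε / t ^ 2) ^ n|)) ∧
    (∀ t : ℝ, 10 * Real.sqrt ε < t →
      DifferentiableAt ℝ (fAlpha ε) t ∧
      DifferentiableAt ℝ (deriv (fAlpha ε)) t ∧
      (t ^ 2 - ε) * deriv (deriv (fAlpha ε)) t + 5 * t * deriv (fAlpha ε) t
        + 2 * fAlpha ε t = 0) ∧
    (∀ t : ℝ, 10 * Real.sqrt ε ≤ t →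
      (1/2) * t ^ (-2 + Real.sqrt 2 : ℝ) ≤ fAlpha ε t ∧
      fAlpha ε t ≤ 2 * t ^ (-2 + Real.sqrt 2 : ℝ)) := by
  refine ⟨fun t ht => summable_abs_aCoeff_mul_pow hε ht, fun t ht => ?_, fun t ht => ?_⟩
  · have hf' := hasDerivAt_fAlpha hε ht
    have hf'' := hasDerivAt_deriv_fAlpha hε ht
    refine ⟨hf'.differentiableAt, hf''.differentiableAt, ?_⟩
    rw [hf''.deriv, hf'.deriv, fAlpha_eq_tsum ((by positivity : 0 < 10 * √ε).trans ht)]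
    exact fAlpha_ode_tsum hε ht.le
  · have hpos : 0 < t ^ (-2 + √2) := rpow_pos_of_pos ((by positivity : 0 < 10 * √ε).trans_le ht) _
    have hS := abs_le.mp (abs_tsum_aCoeff_mul_pow_sub_one_le hε ht)
    rw [fAlpha]
    constructor <;> nlinarith
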